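/- arXiv:1710.09316 — 2 statements merged into one kernel-verified Lean document; each statement's English description precedes it below -/
import Mathlib

section
/- Let p be a prime and let X_1, …, X_N be finite sets of integers none of whose elements is divisible by p, and let k_1 < k_2 < … < k_N be distinct nonnegative integers. Set Y := ⋃_{i=1}^N p^{k_i} X_i. Then E(Y)^{1/2} ≤ 6 · Σ_{i=1}^N E(X_i)^{1/2}. -/
/-!
A solution of `y₁ + y₂ = y₃ + y₄` in `Y` always has two entries in the same slice `p ^ kᵢ • Xᵢ`:
otherwise the four exponents are distinct, and the entry with the smallest exponent `e` is not
divisible by `p ^ (e + 1)` while the other three are. For a fixed set `V` and a fixed pair of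
positions, the solutions with those two entries in `V` and the other two in `Y` number at most
`E(V) ^ (1/2) * E(Y) ^ (1/2)` by Cauchy–Schwarz. Summing over the six pairs of positions and over
the slices gives `E(Y) ≤ 6 * ∑ᵢ E(p ^ kᵢ • Xᵢ) ^ (1/2) * E(Y) ^ (1/2)`, and dilation preserves
energy.
-/

/-- Additive energy of a finite set of integers. -/
def addEnergy (A : Finset ℤ) : ℕ :=
  ((A ×ˢ A ×ˢ A ×ˢ A).filter (fun x => x.1 + x.2.1 = x.2.2.1 + x.2.2.2)).card

namespace Real

lemma natCast_le_sqrt_mul_sqrt_of_sq_le {n a b : ℕ} (h : n ^ 2 ≤ a * b) : (n : ℝ) ≤ √a * √b := by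
  rw [← sqrt_mul (Nat.cast_nonneg a), le_sqrt (Nat.cast_nonneg n) (by positivity)]
  exact_mod_cast h

lemma sqrt_le_of_le_mul_sqrt {x c : ℝ} (hc : 0 ≤ c) (h : x ≤ c * √x) : √x ≤ c := by
  rcases lt_or_ge x 0 with hx | hx
  · rw [sqrt_eq_zero_of_nonpos hx.le]; exact hc
  · nlinarith [mul_self_sqrt hx, sqrt_nonneg x]

end Real

open scoped Combinatorics.Additive

namespace Finset

section Coincidences

variable {ι κ γ : Type*} [DecidableEq γ]

lemma card_filter_eq_eq_sum_mul (s : Finset ι) (t : Finset κ) (f : ι → γ) (g : κ → γ)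
    {u : Finset γ} (hu : Set.MapsTo f s u) :
    #{x ∈ s ×ˢ t | f x.1 = g x.2} = ∑ c ∈ u, #{a ∈ s | f a = c} * #{b ∈ t | g b = c} := by
  rw [card_eq_sum_card_fiberwise (f := fun x => f x.1) fun x hx =>
    hu (mem_product.1 (mem_filter.1 hx).1).1]
  refine sum_congr rfl fun c _ => ?_
  rw [filter_filter, ← card_product, ← filter_product]
  congr 1
  exact filter_congr fun x _ =>
    ⟨fun ⟨h, hc⟩ => ⟨hc, h ▸ hc⟩, fun ⟨hc, hc'⟩ => ⟨hc.trans hc'.symm, hc⟩⟩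

lemma sq_card_filter_eq_le (s : Finset ι) (t : Finset κ) (f : ι → γ) (g : κ → γ) :
    #{x ∈ s ×ˢ t | f x.1 = g x.2} ^ 2 ≤
      #{x ∈ s ×ˢ s | f x.1 = f x.2} * #{x ∈ t ×ˢ t | g x.1 = g x.2} := by
  set u := s.image f ∪ t.image g
  have hs : Set.MapsTo f s u := fun a ha => mem_union_left _ (mem_image_of_mem f ha)
  have ht : Set.MapsTo g t u := fun b hb => mem_union_right _ (mem_image_of_mem g hb)
  rw [card_filter_eq_eq_sum_mul s t f g hs, card_filter_eq_eq_sum_mul s s f f hs,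
    card_filter_eq_eq_sum_mul t t g g ht]
  simpa only [sq] using sum_mul_sq_le_sq_mul_sq u _ _

lemma card_filter_le_card_of_injective {s : Finset ι} {t : Finset κ} {p : ι → Prop}
    [DecidablePred p] (f : ι → κ) (hf : f.Injective) (h : ∀ a ∈ s, p a → f a ∈ t) :
    #{a ∈ s | p a} ≤ #t :=
  card_le_card_of_injOn f (fun a ha => h a (mem_filter.1 ha).1 (mem_filter.1 ha).2) hf.injOn

end Coincidences

section Add

variable {α β : Type*} [DecidableEq α] [DecidableEq β] [Add α] [Add β]

lemma sq_card_filter_add_eq_add_le (s t : Finset α) :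
    #{x ∈ (s ×ˢ s) ×ˢ t ×ˢ t | x.1.1 + x.1.2 = x.2.1 + x.2.2} ^ 2 ≤ E[s] * E[t] := by
  simpa only [addEnergy_eq_card_filter] using
    sq_card_filter_eq_le (s ×ˢ s) (t ×ˢ t) (fun a => a.1 + a.2) (fun b => b.1 + b.2)

lemma addEnergy_image_of_injective (f : α →ₙ+ β) (hf : Function.Injective f)
    (s t : Finset α) : E[s.image f, t.image f] = E[s, t] := by
  have hF : Function.Injective (Prod.map (Prod.map f f) (Prod.map f f)) :=
    (hf.prodMap hf).prodMap (hf.prodMap hf)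
  simp only [addEnergy, ← prodMap_image_product, filter_image, card_image_of_injective _ hF,
    Prod.map_fst, Prod.map_snd, ← map_add, hf.eq_iff]

end Add

section AddCommGroup

variable {α : Type*} [DecidableEq α] [AddCommGroup α]

lemma addEnergy_eq_card_filter_sub (s t : Finset α) :
    E[s, t] = #{x ∈ (s ×ˢ s) ×ˢ t ×ˢ t | x.1.1 - x.1.2 = x.2.2 - x.2.1} := by
  rw [addEnergy]
  congr 1
  exact filter_congr fun x _ => by rw [sub_eq_sub_iff_add_eq_add, add_comm x.2.2]

lemma addEnergy_self_eq_card_filter_sub (s : Finset α) :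
    E[s] = #{x ∈ (s ×ˢ s) ×ˢ s ×ˢ s | x.1.1 - x.1.2 = x.2.1 - x.2.2} := by
  rw [addEnergy_eq_card_filter_sub]
  exact card_equiv (.prodCongr (.refl _) (.prodComm _ _)) (by simp [and_comm])

lemma sq_addEnergy_le (s t : Finset α) : E[s, t] ^ 2 ≤ E[s] * E[t] := by
  calc E[s, t] ^ 2
      = #{x ∈ (s ×ˢ s) ×ˢ t ×ˢ t | x.1.1 - x.1.2 = x.2.2 - x.2.1} ^ 2 := by
        rw [addEnergy_eq_card_filter_sub]
    _ ≤ #{x ∈ (s ×ˢ s) ×ˢ s ×ˢ s | x.1.1 - x.1.2 = x.2.1 - x.2.2} *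
          #{x ∈ (t ×ˢ t) ×ˢ t ×ˢ t | x.1.2 - x.1.1 = x.2.2 - x.2.1} :=
        sq_card_filter_eq_le (s ×ˢ s) (t ×ˢ t) (fun a => a.1 - a.2) (fun b => b.2 - b.1)
    _ = E[s] * E[t] := by
        rw [addEnergy_self_eq_card_filter_sub, addEnergy_self_eq_card_filter_sub]
        congr 2
        exact filter_congr fun x _ => by rw [← neg_sub x.1.1, ← neg_sub x.2.1, neg_inj]

-- `x = ((a₁, a₂), (b₁, b₂))` stands for the equation `a₁ + b₁ = a₂ + b₂`, as in `Finset.addEnergy`.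
def TwoEntriesIn (V : Finset α) (x : (α × α) × α × α) : Prop :=
  x.1.1 ∈ V ∧ x.1.2 ∈ V ∨ x.2.1 ∈ V ∧ x.2.2 ∈ V ∨ x.1.1 ∈ V ∧ x.2.2 ∈ V ∨
    x.1.2 ∈ V ∧ x.2.1 ∈ V ∨ x.1.1 ∈ V ∧ x.2.1 ∈ V ∨ x.1.2 ∈ V ∧ x.2.2 ∈ V

instance (V : Finset α) : DecidablePred (TwoEntriesIn V) := fun _ => by
  unfold TwoEntriesIn; infer_instance

-- A pair of positions on opposite sides of `a₁ + b₁ = a₂ + b₂` is counted by `E[V, Y]`,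
-- a pair on the same side by the second term.
lemma card_filter_twoEntriesIn_le (V Y : Finset α) :
    #{x ∈ (Y ×ˢ Y) ×ˢ Y ×ˢ Y | x.1.1 + x.2.1 = x.1.2 + x.2.2 ∧ TwoEntriesIn V x} ≤
      4 * E[V, Y] + 2 * #{x ∈ (V ×ˢ V) ×ˢ Y ×ˢ Y | x.1.1 + x.1.2 = x.2.1 + x.2.2} := by
  rw [addEnergy]
  set Q := (Y ×ˢ Y) ×ˢ Y ×ˢ Y
  set opposite := {x ∈ (V ×ˢ V) ×ˢ Y ×ˢ Y | x.1.1 + x.2.1 = x.1.2 + x.2.2}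
  set same := {x ∈ (V ×ˢ V) ×ˢ Y ×ˢ Y | x.1.1 + x.1.2 = x.2.1 + x.2.2}
  have h₁ := card_filter_le_card_of_injective (s := Q) (t := opposite)
    (p := fun x => x.1.1 + x.2.1 = x.1.2 + x.2.2 ∧ x.1.1 ∈ V ∧ x.1.2 ∈ V) id
    Function.injective_id (by grind)
  have h₂ := card_filter_le_card_of_injective (s := Q) (t := opposite)
    (p := fun x => x.1.1 + x.2.1 = x.1.2 + x.2.2 ∧ x.2.1 ∈ V ∧ x.2.2 ∈ V) (fun x => (x.2, x.1))
    (by intro x y h; grind) (by grind)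
  have h₃ := card_filter_le_card_of_injective (s := Q) (t := opposite)
    (p := fun x => x.1.1 + x.2.1 = x.1.2 + x.2.2 ∧ x.1.1 ∈ V ∧ x.2.2 ∈ V)
    (fun x => ((x.1.1, x.2.2), (x.2.1, x.1.2))) (by intro x y h; grind) (by grind)
  have h₄ := card_filter_le_card_of_injective (s := Q) (t := opposite)
    (p := fun x => x.1.1 + x.2.1 = x.1.2 + x.2.2 ∧ x.1.2 ∈ V ∧ x.2.1 ∈ V)
    (fun x => ((x.2.1, x.1.2), (x.1.1, x.2.2))) (by intro x y h; grind) (by grind)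
  have h₅ := card_filter_le_card_of_injective (s := Q) (t := same)
    (p := fun x => x.1.1 + x.2.1 = x.1.2 + x.2.2 ∧ x.1.1 ∈ V ∧ x.2.1 ∈ V)
    (fun x => ((x.1.1, x.2.1), (x.1.2, x.2.2))) (by intro x y h; grind) (by grind)
  have h₆ := card_filter_le_card_of_injective (s := Q) (t := same)
    (p := fun x => x.1.1 + x.2.1 = x.1.2 + x.2.2 ∧ x.1.2 ∈ V ∧ x.2.2 ∈ V)
    (fun x => ((x.1.2, x.2.2), (x.1.1, x.2.1))) (by intro x y h; grind) (by grind)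
  have hsub : {x ∈ Q | x.1.1 + x.2.1 = x.1.2 + x.2.2 ∧ TwoEntriesIn V x} ⊆
      {x ∈ Q | x.1.1 + x.2.1 = x.1.2 + x.2.2 ∧ x.1.1 ∈ V ∧ x.1.2 ∈ V} ∪
      {x ∈ Q | x.1.1 + x.2.1 = x.1.2 + x.2.2 ∧ x.2.1 ∈ V ∧ x.2.2 ∈ V} ∪
      {x ∈ Q | x.1.1 + x.2.1 = x.1.2 + x.2.2 ∧ x.1.1 ∈ V ∧ x.2.2 ∈ V} ∪
      {x ∈ Q | x.1.1 + x.2.1 = x.1.2 + x.2.2 ∧ x.1.2 ∈ V ∧ x.2.1 ∈ V} ∪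
      {x ∈ Q | x.1.1 + x.2.1 = x.1.2 + x.2.2 ∧ x.1.1 ∈ V ∧ x.2.1 ∈ V} ∪
      {x ∈ Q | x.1.1 + x.2.1 = x.1.2 + x.2.2 ∧ x.1.2 ∈ V ∧ x.2.2 ∈ V} := by
    intro x
    simp only [mem_union, mem_filter, TwoEntriesIn]
    grind
  grw [hsub, card_union_le, card_union_le, card_union_le, card_union_le, card_union_le]
  omega

theorem sqrt_addEnergy_le_of_forall_exists_twoEntriesIn {ι : Type*} [Fintype ι]
    (W : ι → Finset α) (Y : Finset α)
    (h : ∀ x ∈ (Y ×ˢ Y) ×ˢ Y ×ˢ Y, x.1.1 + x.2.1 = x.1.2 + x.2.2 → ∃ i, TwoEntriesIn (W i) x) :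
    √(E[Y] : ℝ) ≤ 6 * ∑ i, √(E[W i] : ℝ) := by
  have hcount (V : Finset α) :
      (#{x ∈ (Y ×ˢ Y) ×ˢ Y ×ˢ Y | x.1.1 + x.2.1 = x.1.2 + x.2.2 ∧ TwoEntriesIn V x} : ℝ) ≤
        6 * √(E[V] : ℝ) * √(E[Y] : ℝ) := by
    have h₁ := Real.natCast_le_sqrt_mul_sqrt_of_sq_le (sq_addEnergy_le V Y)
    have h₂ := Real.natCast_le_sqrt_mul_sqrt_of_sq_le (sq_card_filter_add_eq_add_le V Y)
    have h₃ : (_ : ℝ) ≤ _ := Nat.cast_le.2 (card_filter_twoEntriesIn_le V Y)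
    push_cast at h₃
    linarith
  have hcover : E[Y] ≤ ∑ i,
      #{x ∈ (Y ×ˢ Y) ×ˢ Y ×ˢ Y | x.1.1 + x.2.1 = x.1.2 + x.2.2 ∧ TwoEntriesIn (W i) x} := by
    refine (card_le_card fun x hx => ?_).trans card_biUnion_le
    obtain ⟨i, hi⟩ := h x (mem_filter.1 hx).1 (mem_filter.1 hx).2
    exact mem_biUnion.2 ⟨i, mem_univ i, mem_filter.2 ⟨(mem_filter.1 hx).1, (mem_filter.1 hx).2, hi⟩⟩
  refine Real.sqrt_le_of_le_mul_sqrt (by positivity) ?_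
  calc (E[Y] : ℝ)
      ≤ ∑ i, (#{x ∈ (Y ×ˢ Y) ×ˢ Y ×ˢ Y |
          x.1.1 + x.2.1 = x.1.2 + x.2.2 ∧ TwoEntriesIn (W i) x} : ℝ) := by exact_mod_cast hcover
    _ ≤ ∑ i, 6 * √(E[W i] : ℝ) * √(E[Y] : ℝ) := sum_le_sum fun i _ => hcount (W i)
    _ = 6 * (∑ i, √(E[W i] : ℝ)) * √(E[Y] : ℝ) := by rw [mul_sum, sum_mul]

end AddCommGroup

end Finset

section Divisibility

variable {R : Type*} [CommRing R] [IsDomain R] {p : R}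

theorem exponent_eq_of_pow_mul_add_pow_mul_eq (hp : p ≠ 0) {x y z w : R} {a b c d : ℕ}
    (hx : ¬p ∣ x) (hy : ¬p ∣ y) (hz : ¬p ∣ z) (hw : ¬p ∣ w)
    (h : p ^ a * x + p ^ b * y = p ^ c * z + p ^ d * w) :
    a = b ∨ c = d ∨ a = c ∨ b = d ∨ a = d ∨ b = c := by
  have not_dvd {e : ℕ} {u v s t : R} (hu : ¬p ∣ u) (hv : p ^ (e + 1) ∣ v) (hs : p ^ (e + 1) ∣ s)
      (ht : p ^ (e + 1) ∣ t) (h : p ^ e * u + v = s + t) : False := by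
    have hdvd : p ^ (e + 1) ∣ p ^ e * u := by
      rw [eq_sub_of_add_eq h]
      exact (hs.add ht).sub hv
    rw [pow_succ, mul_dvd_mul_iff_left (pow_ne_zero e hp)] at hdvd
    exact hu hdvd
  have dvd {e f : ℕ} (u : R) (h : e < f) : p ^ (e + 1) ∣ p ^ f * u :=
    (pow_dvd_pow p h).mul_right u
  by_contra! hne
  rcases (by omega : (a < b ∧ a < c ∧ a < d) ∨ (b < a ∧ b < c ∧ b < d) ∨
      (c < a ∧ c < b ∧ c < d) ∨ (d < a ∧ d < b ∧ d < c)) with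
    ⟨h₁, h₂, h₃⟩ | ⟨h₁, h₂, h₃⟩ | ⟨h₁, h₂, h₃⟩ | ⟨h₁, h₂, h₃⟩
  · exact not_dvd hx (dvd y h₁) (dvd z h₂) (dvd w h₃) h
  · exact not_dvd hy (dvd x h₁) (dvd z h₂) (dvd w h₃) (by rw [add_comm, h])
  · exact not_dvd hz (dvd w h₃) (dvd x h₁) (dvd y h₂) h.symm
  · exact not_dvd hw (dvd z h₃) (dvd x h₁) (dvd y h₂) (by rw [add_comm, h])

theorem exists_twoEntriesIn_of_add_eq_add [DecidableEq R] {ι : Type*} (hp : p ≠ 0)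
    {k : ι → ℕ} (hk : k.Injective) {W : ι → Finset R}
    (hW : ∀ i, ∀ y ∈ W i, ∃ x, ¬p ∣ x ∧ y = p ^ k i * x) {Y : Finset R}
    (hY : ∀ y ∈ Y, ∃ i, y ∈ W i) :
    ∀ x ∈ (Y ×ˢ Y) ×ˢ Y ×ˢ Y, x.1.1 + x.2.1 = x.1.2 + x.2.2 →
      ∃ i, Finset.TwoEntriesIn (W i) x := by
  rintro ⟨⟨a₁, a₂⟩, b₁, b₂⟩ hx h
  simp only [Finset.mem_product] at hx
  obtain ⟨⟨ha₁, ha₂⟩, hb₁, hb₂⟩ := hx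
  obtain ⟨i₁, hi₁⟩ := hY _ ha₁
  obtain ⟨i₂, hi₂⟩ := hY _ ha₂
  obtain ⟨j₁, hj₁⟩ := hY _ hb₁
  obtain ⟨j₂, hj₂⟩ := hY _ hb₂
  obtain ⟨x₁, hx₁, rfl⟩ := hW _ _ hi₁
  obtain ⟨x₂, hx₂, rfl⟩ := hW _ _ hi₂
  obtain ⟨y₁, hy₁, rfl⟩ := hW _ _ hj₁
  obtain ⟨y₂, hy₂, rfl⟩ := hW _ _ hj₂
  have h := exponent_eq_of_pow_mul_add_pow_mul_eq hp hx₁ hy₁ hx₂ hy₂ h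
  simp only [hk.eq_iff] at h
  rcases h with rfl | rfl | rfl | rfl | rfl | rfl
  · exact ⟨i₁, by simp [Finset.TwoEntriesIn, *]⟩
  · exact ⟨i₂, by simp [Finset.TwoEntriesIn, *]⟩
  · exact ⟨i₁, by simp [Finset.TwoEntriesIn, *]⟩
  · exact ⟨j₁, by simp [Finset.TwoEntriesIn, *]⟩
  · exact ⟨i₁, by simp [Finset.TwoEntriesIn, *]⟩
  · exact ⟨j₁, by simp [Finset.TwoEntriesIn, *]⟩

end Divisibility

lemma addEnergy_eq_finset_addEnergy (A : Finset ℤ) : addEnergy A = E[A] :=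
  Finset.card_nbij' (fun x => ((x.1, x.2.2.1), x.2.1, x.2.2.2))
    (fun x => (x.1.1, x.2.1, x.1.2, x.2.2)) (fun x hx => by grind) (fun x hx => by grind)
    (fun _ _ => rfl) (fun _ _ => rfl)

theorem one_prime_separation (p : ℕ) (hp : p.Prime) (N : ℕ) (X : Fin N → Finset ℤ)
    (hX : ∀ i, ∀ x ∈ X i, ¬ (p : ℤ) ∣ x) (k : Fin N → ℕ) (hk : StrictMono k)
    (Y : Finset ℤ) (hY : Y = Finset.univ.biUnion (fun i => (X i).image (fun x => (p : ℤ) ^ (k i) * x))) :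
    Real.sqrt (addEnergy Y) ≤ 6 * ∑ i, Real.sqrt (addEnergy (X i)) := by
  have hp₀ : (p : ℤ) ≠ 0 := Int.natCast_ne_zero.2 hp.ne_zero
  set W : Fin N → Finset ℤ := fun i => (X i).image (AddHom.mulLeft ((p : ℤ) ^ k i))
  have hW : ∀ i, ∀ y ∈ W i, ∃ x, ¬(p : ℤ) ∣ x ∧ y = p ^ k i * x := by
    intro i y hy
    obtain ⟨x, hx, rfl⟩ := Finset.mem_image.1 hy
    exact ⟨x, hX i x hx, rfl⟩
  have hYW : ∀ y ∈ Y, ∃ i, y ∈ W i := by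
    intro y hy
    rw [hY, Finset.mem_biUnion] at hy
    obtain ⟨i, -, hi⟩ := hy
    exact ⟨i, hi⟩
  have hEW (i : Fin N) : E[W i] = E[X i] :=
    Finset.addEnergy_image_of_injective _ (mul_right_injective₀ (pow_ne_zero _ hp₀)) _ _
  simp only [addEnergy_eq_finset_addEnergy, ← hEW]
  exact Finset.sqrt_addEnergy_le_of_forall_exists_twoEntriesIn W Y
    (exists_twoEntriesIn_of_add_eq_add hp₀ hk.injective hW hYW)
end

section
/- (Energy cover lemma.) Let A, A_1, …, A_L be finite sets of integers such that A ⊆ ⋃_{i=1}^L A_i, and suppose every element a ∈ A belongs to at least M of the sets A_i. Then E_+(A) ≤ M^{−4} · (Σ_{i=1}^L E_+(A_i)^{1/4})^4. -/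
open Finset
open scoped Pointwise

namespace Finset

variable {G : Type*} [DecidableEq G]

lemma card_filter_mem_prod_four {ι : Type*} [Fintype ι] (Ai : ι → Finset G) (q : G × G × G × G) :
    #{p : ι × ι × ι × ι | q.1 ∈ Ai p.1 ∧ q.2.1 ∈ Ai p.2.1 ∧ q.2.2.1 ∈ Ai p.2.2.1 ∧
        q.2.2.2 ∈ Ai p.2.2.2} =
      #{i | q.1 ∈ Ai i} *
        (#{i | q.2.1 ∈ Ai i} * (#{i | q.2.2.1 ∈ Ai i} * #{i | q.2.2.2 ∈ Ai i})) := by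
  simp only [← card_product, ← filter_product, univ_product_univ]

section Add

variable [Add G]

def mixedAddEnergy (A B C D : Finset G) : ℕ :=
  #{x ∈ A ×ˢ B ×ˢ C ×ˢ D | x.1 + x.2.1 = x.2.2.1 + x.2.2.2}

def addRep (A B : Finset G) (x : G) : ℕ := #{p ∈ A ×ˢ B | p.1 + p.2 = x}

lemma mixedAddEnergy_mul_pow_le_sum {ι : Type*} [Fintype ι] (A : Finset G) (Ai : ι → Finset G)
    (M : ℕ) (hdeg : ∀ a ∈ A, M ≤ #{i | a ∈ Ai i}) :
    mixedAddEnergy A A A A * M ^ 4 ≤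
      ∑ p : ι × ι × ι × ι, mixedAddEnergy (Ai p.1) (Ai p.2.1) (Ai p.2.2.1) (Ai p.2.2.2) := by
  set T := {x ∈ A ×ˢ A ×ˢ A ×ˢ A | x.1 + x.2.1 = x.2.2.1 + x.2.2.2}
  let inBox (q : G × G × G × G) (p : ι × ι × ι × ι) : Prop :=
    q.1 ∈ Ai p.1 ∧ q.2.1 ∈ Ai p.2.1 ∧ q.2.2.1 ∈ Ai p.2.2.1 ∧ q.2.2.2 ∈ Ai p.2.2.2
  have hmult : ∀ q ∈ T, M ^ 4 ≤ #(univ.bipartiteAbove inBox q) := by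
    rintro ⟨a, b, c, d⟩ hq
    simp only [T, mem_filter, mem_product] at hq
    rw [bipartiteAbove, card_filter_mem_prod_four]
    calc M ^ 4 = M * (M * (M * M)) := by ring
      _ ≤ _ := Nat.mul_le_mul (hdeg a hq.1.1) <| Nat.mul_le_mul (hdeg b hq.1.2.1) <|
          Nat.mul_le_mul (hdeg c hq.1.2.2.1) (hdeg d hq.1.2.2.2)
  calc mixedAddEnergy A A A A * M ^ 4 = ∑ q ∈ T, M ^ 4 := by rw [sum_const, smul_eq_mul]; rfl
    _ ≤ ∑ q ∈ T, #(univ.bipartiteAbove inBox q) := sum_le_sum hmult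
    _ = ∑ p, #(T.bipartiteBelow inBox p) := sum_card_bipartiteAbove_eq_sum_card_bipartiteBelow _
    _ ≤ _ := by
      refine sum_le_sum fun p _ => card_le_card fun q hq => ?_
      simp only [mem_bipartiteBelow, T, mem_filter, mem_product, inBox] at hq
      simp only [mem_filter, mem_product]
      exact ⟨hq.2, hq.1.2⟩

end Add

section AddCommGroup

variable [AddCommGroup G]

lemma mixedAddEnergy_eq_sum_addRep {A B S : Finset G} (hS : A + B ⊆ S) (C D : Finset G) :
    mixedAddEnergy A B C D = ∑ x ∈ S, addRep A B x * addRep C D x := by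
  rw [mixedAddEnergy, card_eq_sum_card_fiberwise (f := fun q => q.1 + q.2.1) (t := S)]
  · refine sum_congr rfl fun x _ => ?_
    rw [addRep, addRep, ← card_product]
    refine card_equiv (Equiv.prodAssoc G G (G × G)).symm fun q => ?_
    simp only [mem_filter, mem_product, Equiv.prodAssoc_symm_apply]
    grind
  · rintro q hq
    simp only [coe_filter, mem_product, Set.mem_ofPred_eq] at hq
    exact hS (add_mem_add hq.1.1 hq.1.2.1)

lemma mixedAddEnergy_neg_swap (A B C D : Finset G) :
    mixedAddEnergy A B C D = mixedAddEnergy A (-C) D (-B) := by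
  refine card_nbij' (fun q => (q.1, -q.2.2.1, q.2.2.2, -q.2.1))
    (fun q => (q.1, -q.2.2.2, -q.2.1, q.2.2.1)) ?_ ?_ (fun q _ => by simp) (fun q _ => by simp)
  · rintro ⟨a, b, c, d⟩
    simp only [coe_filter, mem_product, mem_neg', neg_neg, Set.mem_ofPred_eq]
    rintro ⟨⟨ha, hb, hc, hd⟩, h⟩
    exact ⟨⟨ha, hc, hd, hb⟩, by grind⟩
  · rintro ⟨a, b, c, d⟩
    simp only [coe_filter, mem_product, mem_neg', Set.mem_ofPred_eq]
    rintro ⟨⟨ha, hb, hc, hd⟩, h⟩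
    exact ⟨⟨ha, hd, hb, hc⟩, by grind⟩

lemma mixedAddEnergy_sq_le (A B C D : Finset G) :
    mixedAddEnergy A B C D ^ 2 ≤ mixedAddEnergy A B A B * mixedAddEnergy C D C D := by
  rw [mixedAddEnergy_eq_sum_addRep (subset_union_left (s₂ := C + D)),
    mixedAddEnergy_eq_sum_addRep (subset_union_left (s₂ := C + D)),
    mixedAddEnergy_eq_sum_addRep (subset_union_right (s₁ := A + B))]
  simpa only [sq] using sum_mul_sq_le_sq_mul_sq _ _ _

lemma mixedAddEnergy_self_sq_le (A B : Finset G) :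
    mixedAddEnergy A B A B ^ 2 ≤ mixedAddEnergy A A A A * mixedAddEnergy B B B B := by
  simpa only [← mixedAddEnergy_neg_swap] using mixedAddEnergy_sq_le A (-A) B (-B)

lemma mixedAddEnergy_pow_four_le (A B C D : Finset G) :
    mixedAddEnergy A B C D ^ 4 ≤ mixedAddEnergy A A A A * mixedAddEnergy B B B B *
      mixedAddEnergy C C C C * mixedAddEnergy D D D D :=
  calc mixedAddEnergy A B C D ^ 4 = (mixedAddEnergy A B C D ^ 2) ^ 2 := by ring
    _ ≤ (mixedAddEnergy A B A B * mixedAddEnergy C D C D) ^ 2 := by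
      gcongr; exact mixedAddEnergy_sq_le A B C D
    _ ≤ _ := by
      rw [mul_pow, mul_assoc _ (mixedAddEnergy C C C C)]
      exact mul_le_mul' (mixedAddEnergy_self_sq_le A B) (mixedAddEnergy_self_sq_le C D)

lemma mixedAddEnergy_le_mul_rpow (A B C D : Finset G) :
    (mixedAddEnergy A B C D : ℝ) ≤ (mixedAddEnergy A A A A : ℝ) ^ ((1 : ℝ) / 4) *
      (mixedAddEnergy B B B B : ℝ) ^ ((1 : ℝ) / 4) * (mixedAddEnergy C C C C : ℝ) ^ ((1 : ℝ) / 4) *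
      (mixedAddEnergy D D D D : ℝ) ^ ((1 : ℝ) / 4) := by
  rw [← Real.mul_rpow (by positivity) (by positivity),
    ← Real.mul_rpow (by positivity) (by positivity),
    ← Real.mul_rpow (by positivity) (by positivity), one_div,
    Real.le_rpow_inv_iff_of_pos (by positivity) (by positivity) (by norm_num)]
  exact_mod_cast mixedAddEnergy_pow_four_le A B C D

end AddCommGroup

end Finset

theorem energy_cover_general (L : ℕ) (A : Finset ℤ) (Ai : Fin L → Finset ℤ) (M : ℕ) (hM : 0 < M)
    (hdeg : ∀ a ∈ A, M ≤ (Finset.univ.filter (fun i => a ∈ Ai i)).card) :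
    (addEnergy A : ℝ) ≤
      (∑ i, (addEnergy (Ai i) : ℝ) ^ ((1 : ℝ) / 4)) ^ 4 / (M : ℝ) ^ 4 := by
  set e : Fin L → ℝ := fun i => (addEnergy (Ai i) : ℝ) ^ ((1 : ℝ) / 4)
  rw [le_div_iff₀ (by positivity)]
  calc (addEnergy A : ℝ) * M ^ 4
      ≤ ∑ p : Fin L × Fin L × Fin L × Fin L,
          (mixedAddEnergy (Ai p.1) (Ai p.2.1) (Ai p.2.2.1) (Ai p.2.2.2) : ℝ) := by
        exact_mod_cast mixedAddEnergy_mul_pow_le_sum A Ai M hdeg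
    _ ≤ ∑ p : Fin L × Fin L × Fin L × Fin L, e p.1 * e p.2.1 * e p.2.2.1 * e p.2.2.2 :=
        sum_le_sum fun p _ => mixedAddEnergy_le_mul_rpow _ _ _ _
    _ = (∑ i, e i) ^ 4 := by
        simp only [Fintype.sum_prod_type, ← sum_mul, ← mul_sum]
        ring

/-- Energy cover lemma: if `A` is covered by the sets `Aᵢ`, each point at least `M` times, then
`E₊(A) ≤ M⁻⁴ (∑ᵢ E₊(Aᵢ)^{1/4})⁴`. -/
theorem energy_cover (L : ℕ) (A : Finset ℤ) (Ai : Fin L → Finset ℤ)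
    (hcover : A ⊆ Finset.univ.biUnion Ai) (M : ℕ) (hM : 0 < M)
    (hdeg : ∀ a ∈ A, M ≤ (Finset.univ.filter (fun i => a ∈ Ai i)).card) :
    (addEnergy A : ℝ) ≤
      (∑ i, (addEnergy (Ai i) : ℝ) ^ ((1 : ℝ) / 4)) ^ 4 / (M : ℝ) ^ 4 :=
  energy_cover_general L A Ai M hM hdeg
end
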